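/- With Z_N = S^N ∏_{i=0}^{N-1}(x+i) and K_λ the ratio of determinants det(Z_{λ_i+2n-i-j})/det(Z_{2n-i-j}): if ν = (λ_1+1,...,λ_n+1) is obtained from λ = (λ_1,...,λ_n) by adding 1 to every part, then K_ν = K_λ · S^n · ∏_{i=1}^n (x + λ_i + n - i). -/
import Mathlib


noncomputable section
namespace Stmt15

/-- The field of rational functions `ℚ(S, x)`. -/
abbrev K : Type := FractionRing (MvPolynomial (Fin 2) ℚ)

def S : K := algebraMap (MvPolynomial (Fin 2) ℚ) K (MvPolynomial.X 0)
def x : K := algebraMap (MvPolynomial (Fin 2) ℚ) K (MvPolynomial.X 1)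

/-- `Z_N = S^N ∏_{i=0}^{N-1} (x+i)`. -/
def Z (N : ℕ) : K := S ^ N * ∏ i ∈ Finset.range N, (x + (i : K))

/-- For a partition `μ = (μ_1,…,μ_m)` (0-indexed),
`K_μ = det(Z_{μ_i+2m-i-j})_{i,j=1}^m / det(Z_{2m-i-j})_{i,j=1}^m`. -/
def Kmom (m : ℕ) (μ : Fin m → ℕ) : K :=
  (Matrix.of fun i j : Fin m => Z (μ i + (2 * m - 2 - (i : ℕ) - (j : ℕ)))).det /
    (Matrix.of fun i j : Fin m => Z (2 * m - 2 - (i : ℕ) - (j : ℕ))).det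

lemma Z_add (a b : ℕ) :
    Z (a + b) = Z a * (S ^ b * ∏ k ∈ Finset.range b, (x + (a : K) + (k : K))) := by
  unfold Z
  rw [pow_add, Finset.prod_range_add]
  push_cast
  ring_nf

open Polynomial in
lemma det_pochhammer (n : ℕ) (y : Fin n → K) :
    (Matrix.of fun i j : Fin n => ∏ k ∈ Finset.range (j : ℕ), (y i + (k : K))).det
      = (Matrix.vandermonde y).det := by
  have h := Matrix.det_eval_matrixOfPolynomials_eq_det_vandermonde y
    (fun j => ∏ k ∈ Finset.range (j : ℕ), (X + C (k : K)))
    (fun j => by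
      rw [Polynomial.natDegree_prod_of_monic _ _ (fun k _ => monic_X_add_C _)]
      simp only [Polynomial.natDegree_X_add_C]
      simp)
    (fun j => monic_prod_of_monic _ _ (fun k _ => monic_X_add_C _))
  rw [h]
  congr 1
  ext i j
  simp [eval_prod]

lemma det_shift (n : ℕ) (y : Fin n → K) (a : ℚ) :
    (Matrix.of fun i j : Fin n =>
        ∏ k ∈ Finset.range (n - 1 - (j : ℕ)), (y i + (a : K) + (k : K))).det
      = (Matrix.of fun i j : Fin n =>
        ∏ k ∈ Finset.range (n - 1 - (j : ℕ)), (y i + (k : K))).det := by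
  have key : ∀ z : Fin n → K,
      ((Equiv.Perm.sign (Fin.revPerm : Equiv.Perm (Fin n)) : ℤ) : K) *
        (Matrix.of fun i j : Fin n =>
          ∏ k ∈ Finset.range (n - 1 - (j : ℕ)), (z i + (k : K))).det
      = (Matrix.vandermonde z).det := by
    intro z
    rw [← Matrix.det_permute' Fin.revPerm]
    rw [← det_pochhammer n z]
    congr 1
    ext i j
    simp only [Matrix.submatrix_apply, Matrix.of_apply, id_eq]
    congr 1
    have hj := j.isLt
    simp only [Fin.revPerm_apply, Fin.val_rev]
    congr 1
    omega
  have h1 := key (fun i => y i + (a : K))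
  have h2 := key y
  have hv : (Matrix.vandermonde fun i => y i + (a : K)).det = (Matrix.vandermonde y).det :=
    Matrix.det_vandermonde_add y (a : K)
  have hs : ((Equiv.Perm.sign (Fin.revPerm : Equiv.Perm (Fin n)) : ℤ) : K) ≠ 0 := by
    rcases Int.units_eq_one_or (Equiv.Perm.sign (Fin.revPerm : Equiv.Perm (Fin n))) with h | h <;>
      rw [h] <;> norm_num
  apply mul_left_cancel₀ hs
  rw [h2, ← hv, ← h1]

lemma num_fact (n : ℕ) (μ : Fin n → ℕ) :
    (Matrix.of fun i j : Fin n => Z (μ i + (2 * n - 2 - (i : ℕ) - (j : ℕ)))).det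
      = (∏ i : Fin n, Z (μ i + (n - 1 - (i : ℕ)))) *
        ((∏ j : Fin n, S ^ (n - 1 - (j : ℕ))) *
          (Matrix.of fun i j : Fin n => ∏ k ∈ Finset.range (n - 1 - (j : ℕ)),
            (x + ((μ i + (n - 1 - (i : ℕ)) : ℕ) : K) + (k : K))).det) := by
  have hM : (Matrix.of fun i j : Fin n => Z (μ i + (2 * n - 2 - (i : ℕ) - (j : ℕ))))
      = Matrix.of fun i j : Fin n => (fun i : Fin n => Z (μ i + (n - 1 - (i : ℕ)))) i *
          (Matrix.of fun i j : Fin n => (fun j : Fin n => S ^ (n - 1 - (j : ℕ))) j *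
            (Matrix.of fun i j : Fin n => ∏ k ∈ Finset.range (n - 1 - (j : ℕ)),
              (x + ((μ i + (n - 1 - (i : ℕ)) : ℕ) : K) + (k : K))) i j) i j := by
    ext i j
    simp only [Matrix.of_apply]
    rw [← Z_add]
    congr 1
    have hi := i.isLt
    have hj := j.isLt
    omega
  rw [hM, Matrix.det_mul_column, Matrix.det_mul_row]

/-- If `ν = (λ_1+1,…,λ_n+1)` is obtained from `λ` by adding `1` to every part, then
`K_ν = K_λ · S^n · ∏_{i=1}^n (x + λ_i + n - i)`. -/
theorem stmt15 (n : ℕ) (lam : Fin n → ℕ) (hlam : Antitone lam) :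
    Kmom n (fun i => lam i + 1) =
      Kmom n lam * S ^ n *
        ∏ i : Fin n, (x + (lam i : K) + ((n - 1 - (i : ℕ) : ℕ) : K)) := by
  have h1 := num_fact n (fun i => lam i + 1)
  have h2 := num_fact n lam
  -- the shifted inner determinant equals the unshifted one
  have hdet : (Matrix.of fun i j : Fin n => ∏ k ∈ Finset.range (n - 1 - (j : ℕ)),
        (x + (((lam i + 1) + (n - 1 - (i : ℕ)) : ℕ) : K) + (k : K))).det
      = (Matrix.of fun i j : Fin n => ∏ k ∈ Finset.range (n - 1 - (j : ℕ)),
        (x + ((lam i + (n - 1 - (i : ℕ)) : ℕ) : K) + (k : K))).det := by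
    have := det_shift n (fun i => x + ((lam i + (n - 1 - (i : ℕ)) : ℕ) : K)) 1
    rw [← this]
    congr 1
    ext i j
    simp only [Matrix.of_apply]
    apply Finset.prod_congr rfl
    intro k _
    push_cast
    ring
  -- product of leading Z-factors
  have hprod : (∏ i : Fin n, Z ((lam i + 1) + (n - 1 - (i : ℕ))))
      = (∏ i : Fin n, Z (lam i + (n - 1 - (i : ℕ)))) * S ^ n *
        ∏ i : Fin n, (x + (lam i : K) + ((n - 1 - (i : ℕ) : ℕ) : K)) := by
    have step : ∀ i : Fin n, Z ((lam i + 1) + (n - 1 - (i : ℕ)))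
        = Z (lam i + (n - 1 - (i : ℕ))) * (S * (x + (lam i : K) + ((n - 1 - (i : ℕ) : ℕ) : K))) := by
      intro i
      have : (lam i + 1) + (n - 1 - (i : ℕ)) = (lam i + (n - 1 - (i : ℕ))) + 1 := by omega
      rw [this, Z_add, Finset.prod_range_one]
      push_cast
      ring
    rw [Finset.prod_congr rfl (fun i _ => step i), Finset.prod_mul_distrib,
      Finset.prod_mul_distrib]
    simp [mul_assoc]
  have hnum : (Matrix.of fun i j : Fin n =>
        Z ((fun i => lam i + 1) i + (2 * n - 2 - (i : ℕ) - (j : ℕ)))).det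
      = (Matrix.of fun i j : Fin n => Z (lam i + (2 * n - 2 - (i : ℕ) - (j : ℕ)))).det *
        (S ^ n * ∏ i : Fin n, (x + (lam i : K) + ((n - 1 - (i : ℕ) : ℕ) : K))) := by
    rw [h1, h2, hdet, hprod]
    ring
  unfold Kmom
  rw [hnum]
  rw [mul_comm (S ^ n) _, ← mul_assoc, mul_div_right_comm, mul_div_right_comm]
  ring


end Stmt15
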